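/- Let (a,b,c,q,r) solve the first negative AKNS flow with a² + bc = 1 and let f satisfy 2a = b e^{-f} - c e^{f} with b e^{-f} + c e^{f} ≠ 0. If (φ₁, φ₂) solves the AKNS linear system (φ₁)_y = λφ₁ - qφ₂, (φ₂)_y = rφ₁ - λφ₂, (φ₁)_s = (aφ₁ + bφ₂)/(4λ), (φ₂)_s = (cφ₁ - aφ₂)/(4λ), then φ = e^{-f/2} φ₁ + e^{f/2} φ₂ satisfies φ_s + (f_s/(2λ)) φ_y - (f_ys/(4λ)) φ = 0. -/

import Mathlib

noncomputable def pdy (f : ℝ → ℝ → ℝ) : ℝ → ℝ → ℝ := fun y s => deriv (fun y' => f y' s) y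

noncomputable def pds (f : ℝ → ℝ → ℝ) : ℝ → ℝ → ℝ := fun y s => deriv (fun s' => f y s') s

def Smooth2 (f : ℝ → ℝ → ℝ) : Prop := ContDiff ℝ (⊤ : ℕ∞) (fun p : ℝ × ℝ => f p.1 p.2)

/-- The first negative flow of the AKNS hierarchy:
`q_s = b/2`, `r_s = c/2`, `b_y = 2aq`, `c_y = 2ar`, `a_y + br + cq = 0`. -/
def AKNSNegFlow (a b c q r : ℝ → ℝ → ℝ) : Prop :=
  (∀ y s, pds q y s = (1/2) * b y s) ∧
  (∀ y s, pds r y s = (1/2) * c y s) ∧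
  (∀ y s, pdy b y s = 2 * a y s * q y s) ∧
  (∀ y s, pdy c y s = 2 * a y s * r y s) ∧
  (∀ y s, pdy a y s + b y s * r y s + c y s * q y s = 0)

lemma smooth2_diffAt_s {f : ℝ → ℝ → ℝ} (hf : Smooth2 f) (y s : ℝ) :
    DifferentiableAt ℝ (fun s' => f y s') s := by
  have h := (hf.differentiable (by simp)).differentiableAt (x := (y, s))
  exact h.comp s (DifferentiableAt.prodMk (differentiableAt_const y) differentiableAt_id)

lemma smooth2_diffAt_y {f : ℝ → ℝ → ℝ} (hf : Smooth2 f) (y s : ℝ) :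
    DifferentiableAt ℝ (fun y' => f y' s) y := by
  have h := (hf.differentiable (by simp)).differentiableAt (x := (y, s))
  exact h.comp y (DifferentiableAt.prodMk (differentiableAt_id : DifferentiableAt ℝ (fun x : ℝ => x) y) (differentiableAt_const s))

lemma fy_formula (a b c q r f : ℝ → ℝ → ℝ)
    (ha : Smooth2 a) (hb : Smooth2 b) (hc : Smooth2 c) (hf : Smooth2 f)
    (hby : ∀ y s, pdy b y s = 2 * a y s * q y s)
    (hcy : ∀ y s, pdy c y s = 2 * a y s * r y s)
    (hay : ∀ y s, pdy a y s + b y s * r y s + c y s * q y s = 0)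
    (hff : ∀ y s, 2 * a y s = b y s * Real.exp (-(f y s)) - c y s * Real.exp (f y s))
    (hne : ∀ y s, b y s * Real.exp (-(f y s)) + c y s * Real.exp (f y s) ≠ 0) :
    ∀ y s, pdy f y s = q y s * Real.exp (-(f y s)) + r y s * Real.exp (f y s) := by
  intro y s
  have h1 : HasDerivAt (fun y' => f y' s) (pdy f y s) y := (smooth2_diffAt_y hf y s).hasDerivAt
  have hL : HasDerivAt (fun y' => 2 * a y' s) (2 * pdy a y s) y :=
    (smooth2_diffAt_y ha y s).hasDerivAt.const_mul 2
  have hR : HasDerivAt (fun y' => b y' s * Real.exp (-(f y' s)) - c y' s * Real.exp (f y' s))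
      (pdy b y s * Real.exp (-(f y s)) + b y s * (Real.exp (-(f y s)) * (-(pdy f y s)))
        - (pdy c y s * Real.exp (f y s) + c y s * (Real.exp (f y s) * pdy f y s))) y :=
    ((smooth2_diffAt_y hb y s).hasDerivAt.mul h1.neg.exp).sub
      ((smooth2_diffAt_y hc y s).hasDerivAt.mul h1.exp)
  have heq : (fun y' => 2 * a y' s)
      = fun y' => b y' s * Real.exp (-(f y' s)) - c y' s * Real.exp (f y' s) :=
    funext fun y' => hff y' s
  have hL' : HasDerivAt (fun y' => b y' s * Real.exp (-(f y' s)) - c y' s * Real.exp (f y' s))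
      (2 * pdy a y s) y := heq ▸ hL
  have key := hR.unique hL'
  have hXY : Real.exp (-(f y s)) * Real.exp (f y s) = 1 := by
    rw [← Real.exp_add]; simp
  have hay' : pdy a y s = -(b y s * r y s + c y s * q y s) := by linarith [hay y s]
  have hz : (pdy f y s - (q y s * Real.exp (-(f y s)) + r y s * Real.exp (f y s)))
      * (b y s * Real.exp (-(f y s)) + c y s * Real.exp (f y s)) = 0 := by
    rw [hby, hcy, hay'] at key
    linear_combination (-1 : ℝ) * key
      + (Real.exp (-(f y s)) * q y s - Real.exp (f y s) * r y s) * hff y s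
      - (2 * (b y s * r y s + c y s * q y s)) * hXY
  rcases mul_eq_zero.1 hz with h | h
  · linarith [sub_eq_zero.1 h]
  · exact absurd h (hne y s)

/-- gauge transformation of the linear problem.  If `(φ₁, φ₂)` solves
the AKNS linear system and its negative-flow time evolution, then
`φ = e^{-f/2} φ₁ + e^{f/2} φ₂` satisfies
`φ_s + (f_s/(2λ)) φ_y - (f_ys/(4λ)) φ = 0`. -/
theorem gauge_transformation
    (lam : ℝ) (hlam : lam ≠ 0)
    (a b c q r f φ₁ φ₂ : ℝ → ℝ → ℝ)
    (ha : Smooth2 a) (hb : Smooth2 b) (hc : Smooth2 c)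
    (hq : Smooth2 q) (hr : Smooth2 r) (hf : Smooth2 f)
    (hφ₁ : Smooth2 φ₁) (hφ₂ : Smooth2 φ₂)
    (hflow : AKNSNegFlow a b c q r)
    (hkk : ∀ y s, (a y s) ^ 2 + b y s * c y s = 1)
    (hff : ∀ y s, 2 * a y s
        = b y s * Real.exp (-(f y s)) - c y s * Real.exp (f y s))
    (hne : ∀ y s, b y s * Real.exp (-(f y s)) + c y s * Real.exp (f y s) ≠ 0)
    (hlin1 : ∀ y s, pdy φ₁ y s = lam * φ₁ y s - q y s * φ₂ y s)
    (hlin2 : ∀ y s, pdy φ₂ y s = r y s * φ₁ y s - lam * φ₂ y s)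
    (hlin3 : ∀ y s, pds φ₁ y s = (a y s * φ₁ y s + b y s * φ₂ y s) / (4 * lam))
    (hlin4 : ∀ y s, pds φ₂ y s = (c y s * φ₁ y s - a y s * φ₂ y s) / (4 * lam)) :
    ∀ y s,
      pds (fun y s => Real.exp (-(f y s) / 2) * φ₁ y s
            + Real.exp (f y s / 2) * φ₂ y s) y s
        + (pds f y s / (2 * lam))
            * pdy (fun y s => Real.exp (-(f y s) / 2) * φ₁ y s
                + Real.exp (f y s / 2) * φ₂ y s) y s
        - (pds (pdy f) y s / (4 * lam))
            * (Real.exp (-(f y s) / 2) * φ₁ y s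
                + Real.exp (f y s / 2) * φ₂ y s) = 0 := by
  obtain ⟨hqs, hrs, hby, hcy, hay⟩ := hflow
  have hfy := fy_formula a b c q r f ha hb hc hf hby hcy hay hff hne
  intro y s
  have h1s : HasDerivAt (fun s' => f y s') (pds f y s) s := (smooth2_diffAt_s hf y s).hasDerivAt
  have h1y : HasDerivAt (fun y' => f y' s) (pdy f y s) y := (smooth2_diffAt_y hf y s).hasDerivAt
  -- second mixed derivative
  have hfys : pds (pdy f) y s
      = pds q y s * Real.exp (-(f y s)) + q y s * (Real.exp (-(f y s)) * (-(pds f y s)))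
        + (pds r y s * Real.exp (f y s) + r y s * (Real.exp (f y s) * (pds f y s))) := by
    have heq : (fun s' => pdy f y s')
        = fun s' => q y s' * Real.exp (-(f y s')) + r y s' * Real.exp (f y s') :=
      funext fun s' => hfy y s'
    have hD : HasDerivAt
        (fun s' => q y s' * Real.exp (-(f y s')) + r y s' * Real.exp (f y s'))
        (pds q y s * Real.exp (-(f y s)) + q y s * (Real.exp (-(f y s)) * (-(pds f y s)))
          + (pds r y s * Real.exp (f y s) + r y s * (Real.exp (f y s) * (pds f y s)))) s :=
      ((smooth2_diffAt_s hq y s).hasDerivAt.mul h1s.neg.exp).add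
        ((smooth2_diffAt_s hr y s).hasDerivAt.mul h1s.exp)
    show deriv (fun s' => pdy f y s') s = _
    rw [heq]; exact hD.deriv
  -- s-derivative of φ
  have eS : pds (fun y s => Real.exp (-(f y s) / 2) * φ₁ y s
        + Real.exp (f y s / 2) * φ₂ y s) y s
      = Real.exp (-(f y s) / 2) * (-(pds f y s) / 2) * φ₁ y s
          + Real.exp (-(f y s) / 2) * pds φ₁ y s
        + (Real.exp (f y s / 2) * (pds f y s / 2) * φ₂ y s
          + Real.exp (f y s / 2) * pds φ₂ y s) := by
    have hD : HasDerivAt (fun s' => Real.exp (-(f y s') / 2) * φ₁ y s'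
          + Real.exp (f y s' / 2) * φ₂ y s')
        (Real.exp (-(f y s) / 2) * (-(pds f y s) / 2) * φ₁ y s
          + Real.exp (-(f y s) / 2) * pds φ₁ y s
        + (Real.exp (f y s / 2) * (pds f y s / 2) * φ₂ y s
          + Real.exp (f y s / 2) * pds φ₂ y s)) s :=
      (((h1s.neg.div_const 2).exp.mul (smooth2_diffAt_s hφ₁ y s).hasDerivAt)).add
        (((h1s.div_const 2).exp.mul (smooth2_diffAt_s hφ₂ y s).hasDerivAt))
    exact hD.deriv
  -- y-derivative of φ
  have eY : pdy (fun y s => Real.exp (-(f y s) / 2) * φ₁ y s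
        + Real.exp (f y s / 2) * φ₂ y s) y s
      = Real.exp (-(f y s) / 2) * (-(pdy f y s) / 2) * φ₁ y s
          + Real.exp (-(f y s) / 2) * pdy φ₁ y s
        + (Real.exp (f y s / 2) * (pdy f y s / 2) * φ₂ y s
          + Real.exp (f y s / 2) * pdy φ₂ y s) := by
    have hD : HasDerivAt (fun y' => Real.exp (-(f y' s) / 2) * φ₁ y' s
          + Real.exp (f y' s / 2) * φ₂ y' s)
        (Real.exp (-(f y s) / 2) * (-(pdy f y s) / 2) * φ₁ y s
          + Real.exp (-(f y s) / 2) * pdy φ₁ y s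
        + (Real.exp (f y s / 2) * (pdy f y s / 2) * φ₂ y s
          + Real.exp (f y s / 2) * pdy φ₂ y s)) y :=
      (((h1y.neg.div_const 2).exp.mul (smooth2_diffAt_y hφ₁ y s).hasDerivAt)).add
        (((h1y.div_const 2).exp.mul (smooth2_diffAt_y hφ₂ y s).hasDerivAt))
    exact hD.deriv
  rw [eS, eY, hfys, hlin1, hlin2, hlin3, hlin4, hqs, hrs, hfy]
  have hX : Real.exp (-(f y s)) = Real.exp (-(f y s) / 2) * Real.exp (-(f y s) / 2) := by
    rw [← Real.exp_add]; congr 1; ring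
  have hY : Real.exp (f y s) = Real.exp (f y s / 2) * Real.exp (f y s / 2) := by
    rw [← Real.exp_add]; congr 1; ring
  have hv : Real.exp (f y s / 2) = (Real.exp (-(f y s) / 2))⁻¹ := by
    rw [← Real.exp_neg]; congr 1; ring
  have ha2 : a y s = (b y s * (Real.exp (-(f y s) / 2) * Real.exp (-(f y s) / 2))
      - c y s * (Real.exp (f y s / 2) * Real.exp (f y s / 2))) / 2 := by
    rw [← hX, ← hY]; linarith [hff y s]
  rw [hX, hY, ha2, hv]
  have hu : Real.exp (-(f y s) / 2) ≠ 0 := Real.exp_ne_zero _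
  field_simp
  ring
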